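/- Fix Z > 0 and σ ≥ 0, and on (0,∞) × ℝ let p(x, ξ) = x²ξ² − 2·x·ξ·√(σ² + Z·x) and ξ_sc(x, ξ) = x·ξ/√(σ² + Z·x). Then for every x > 0 and ξ ∈ ℝ: (i) (∂p/∂ξ)(x, ξ)·x = 2·x²·√(σ² + Z·x)·(ξ_sc(x, ξ) − 1); and (ii) (H_p ξ_sc)(x, ξ) = (∂p/∂ξ)(x, ξ)·x·(∂ξ_sc/∂x)(x, ξ) − x·(∂p/∂x)(x, ξ)·(∂ξ_sc/∂ξ)(x, ξ) = (Z·x²/√(σ² + Z·x))·ξ_sc(x, ξ)·(2 − ξ_sc(x, ξ)). In particular, along the rescaled Hamiltonian flow the fiber variable ξ_sc has critical values exactly ξ_sc = 0 and ξ_sc = 2 (the two radial sets), and x is increasing where ξ_sc > 1 and decreasing where ξ_sc < 1. -/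

import Mathlib

/-!
With `s = √(σ² + Zx)`, whose `x`-derivative is `Z / (2s)`, the four partial derivatives are
rational in `x, ξ, s`, and after clearing denominators both identities hold as polynomial
identities in `x, ξ, s, Z`: no relation between `s` and `x` is needed, which is why the proofs
generalize `s` away. The prefactors `2x²s` and `Zx²/s` are positive for `x > 0`, so the zeros
of `H_p ξ_sc` and the sign of the `x`-component are read off the remaining factors.
-/

/-- Radial principal symbol `p(x,ξ) = x²ξ² − 2xξ√(σ²+Zx)` of the conjugated operator. -/
noncomputable def symb (Z σ x ξ : ℝ) : ℝ :=
  x ^ 2 * ξ ^ 2 - 2 * x * ξ * Real.sqrt (σ ^ 2 + Z * x)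

/-- Rescaled (sc,leC) fiber coordinate `ξ_sc(x,ξ) = xξ/√(σ²+Zx)`. -/
noncomputable def xiSc (Z σ x ξ : ℝ) : ℝ :=
  x * ξ / Real.sqrt (σ ^ 2 + Z * x)

open Real

section Derivatives

variable (Z σ : ℝ)

theorem hasDerivAt_sqrt_sq_add_mul {x : ℝ} (hq : 0 < σ ^ 2 + Z * x) :
    HasDerivAt (fun t => √(σ ^ 2 + Z * t)) (Z / (2 * √(σ ^ 2 + Z * x))) x := by
  have h := ((hasDerivAt_id' x).const_mul Z).const_add (σ ^ 2)
  rw [mul_one] at h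
  exact h.sqrt hq.ne'

theorem hasDerivAt_symb_fiber (x ξ : ℝ) :
    HasDerivAt (fun t => symb Z σ x t) (2 * x ^ 2 * ξ - 2 * x * √(σ ^ 2 + Z * x)) ξ := by
  have h := ((hasDerivAt_pow 2 ξ).const_mul (x ^ 2)).sub
    (((hasDerivAt_id' ξ).const_mul (2 * x)).mul_const √(σ ^ 2 + Z * x))
  unfold symb
  exact h.congr_deriv (by ring)

theorem hasDerivAt_symb_base {x : ℝ} (ξ : ℝ) (hq : 0 < σ ^ 2 + Z * x) :
    HasDerivAt (fun t => symb Z σ t ξ)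
      (2 * x * ξ ^ 2 - 2 * ξ * √(σ ^ 2 + Z * x) - x * ξ * Z / √(σ ^ 2 + Z * x)) x := by
  have hs : √(σ ^ 2 + Z * x) ≠ 0 := (sqrt_pos.mpr hq).ne'
  have h := ((hasDerivAt_pow 2 x).mul_const (ξ ^ 2)).sub
    ((((hasDerivAt_id' x).const_mul 2).mul_const ξ).mul (hasDerivAt_sqrt_sq_add_mul Z σ hq))
  unfold symb
  refine h.congr_deriv ?_
  field_simp
  ring

theorem hasDerivAt_xiSc_fiber (x ξ : ℝ) :
    HasDerivAt (fun t => xiSc Z σ x t) (x / √(σ ^ 2 + Z * x)) ξ := by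
  unfold xiSc
  exact (((hasDerivAt_id' ξ).const_mul x).div_const _).congr_deriv (by rw [mul_one])

theorem hasDerivAt_xiSc_base {x : ℝ} (ξ : ℝ) (hq : 0 < σ ^ 2 + Z * x) :
    HasDerivAt (fun t => xiSc Z σ t ξ)
      ((ξ * √(σ ^ 2 + Z * x) - x * ξ * (Z / (2 * √(σ ^ 2 + Z * x)))) / √(σ ^ 2 + Z * x) ^ 2)
      x := by
  have h := ((hasDerivAt_id' x).mul_const ξ).div (hasDerivAt_sqrt_sq_add_mul Z σ hq)
    (sqrt_pos.mpr hq).ne'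
  unfold xiSc
  exact h.congr_deriv (by rw [one_mul])

theorem deriv_symb_fiber_mul {x : ℝ} (ξ : ℝ) (hq : 0 < σ ^ 2 + Z * x) :
    deriv (fun t => symb Z σ x t) ξ * x
      = 2 * x ^ 2 * √(σ ^ 2 + Z * x) * (xiSc Z σ x ξ - 1) := by
  have hs : √(σ ^ 2 + Z * x) ≠ 0 := (sqrt_pos.mpr hq).ne'
  rw [(hasDerivAt_symb_fiber Z σ x ξ).deriv, xiSc]
  generalize √(σ ^ 2 + Z * x) = s at hs ⊢
  field_simp

theorem hamiltonian_xiSc {x : ℝ} (ξ : ℝ) (hq : 0 < σ ^ 2 + Z * x) :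
    deriv (fun t => symb Z σ x t) ξ * x * deriv (fun s => xiSc Z σ s ξ) x
        - x * deriv (fun s => symb Z σ s ξ) x * deriv (fun t => xiSc Z σ x t) ξ
      = Z * x ^ 2 / √(σ ^ 2 + Z * x) * xiSc Z σ x ξ * (2 - xiSc Z σ x ξ) := by
  have hs : √(σ ^ 2 + Z * x) ≠ 0 := (sqrt_pos.mpr hq).ne'
  rw [(hasDerivAt_symb_fiber Z σ x ξ).deriv, (hasDerivAt_symb_base Z σ ξ hq).deriv,
    (hasDerivAt_xiSc_fiber Z σ x ξ).deriv, (hasDerivAt_xiSc_base Z σ ξ hq).deriv, xiSc]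
  generalize √(σ ^ 2 + Z * x) = s at hs ⊢
  field_simp
  ring

end Derivatives

section Signs

variable {c y : ℝ}

theorem mul_mul_two_sub_eq_zero_iff (hc : c ≠ 0) : c * y * (2 - y) = 0 ↔ y = 0 ∨ y = 2 := by
  rw [mul_assoc, mul_eq_zero, or_iff_right hc, mul_eq_zero, sub_eq_zero, eq_comm (a := 2)]

theorem mul_sub_one_pos_iff (hc : 0 < c) : 0 < c * (y - 1) ↔ 1 < y := by
  rw [mul_pos_iff_of_pos_left hc, sub_pos]

theorem mul_sub_one_neg_iff (hc : 0 < c) : c * (y - 1) < 0 ↔ y < 1 := by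
  rw [← neg_pos, ← mul_neg, mul_pos_iff_of_pos_left hc, neg_pos, sub_neg]

end Signs

theorem stmt13_general (Z σ : ℝ) (hZ : 0 < Z) (x : ℝ) (hx : 0 < x) (ξ : ℝ) :
    (deriv (fun t => symb Z σ x t) ξ * x
        = 2 * x ^ 2 * Real.sqrt (σ ^ 2 + Z * x) * (xiSc Z σ x ξ - 1)) ∧
    (deriv (fun t => symb Z σ x t) ξ * x * deriv (fun s => xiSc Z σ s ξ) x
        - x * deriv (fun s => symb Z σ s ξ) x * deriv (fun t => xiSc Z σ x t) ξ
      = Z * x ^ 2 / Real.sqrt (σ ^ 2 + Z * x) * xiSc Z σ x ξ * (2 - xiSc Z σ x ξ)) ∧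
    ((deriv (fun t => symb Z σ x t) ξ * x * deriv (fun s => xiSc Z σ s ξ) x
        - x * deriv (fun s => symb Z σ s ξ) x * deriv (fun t => xiSc Z σ x t) ξ = 0)
      ↔ xiSc Z σ x ξ = 0 ∨ xiSc Z σ x ξ = 2) ∧
    (0 < deriv (fun t => symb Z σ x t) ξ * x ↔ 1 < xiSc Z σ x ξ) ∧
    (deriv (fun t => symb Z σ x t) ξ * x < 0 ↔ xiSc Z σ x ξ < 1) := by
  have hq : 0 < σ ^ 2 + Z * x := by positivity
  have hflow := deriv_symb_fiber_mul Z σ ξ hq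
  have hham := hamiltonian_xiSc Z σ ξ hq
  have hflow_coeff : 0 < 2 * x ^ 2 * √(σ ^ 2 + Z * x) := by positivity
  have hham_coeff : 0 < Z * x ^ 2 / √(σ ^ 2 + Z * x) := by positivity
  refine ⟨hflow, hham, ?_, ?_, ?_⟩
  · rw [hham, mul_mul_two_sub_eq_zero_iff hham_coeff.ne']
  · rw [hflow, mul_sub_one_pos_iff hflow_coeff]
  · rw [hflow, mul_sub_one_neg_iff hflow_coeff]

/-- Hamiltonian computations for `p` and `ξ_sc`: the x-component of
the flow is `2x²√(σ²+Zx)(ξ_sc − 1)`, and `H_p ξ_sc = (Zx²/√(σ²+Zx))·ξ_sc·(2 − ξ_sc)`;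
in particular the critical values of `ξ_sc` are `0` and `2`, and `x` is increasing
where `ξ_sc > 1` and decreasing where `ξ_sc < 1`. -/
theorem stmt13 (Z σ : ℝ) (hZ : 0 < Z) (hσ : 0 ≤ σ) (x : ℝ) (hx : 0 < x) (ξ : ℝ) :
    (deriv (fun t => symb Z σ x t) ξ * x
        = 2 * x ^ 2 * Real.sqrt (σ ^ 2 + Z * x) * (xiSc Z σ x ξ - 1)) ∧
    (deriv (fun t => symb Z σ x t) ξ * x * deriv (fun s => xiSc Z σ s ξ) x
        - x * deriv (fun s => symb Z σ s ξ) x * deriv (fun t => xiSc Z σ x t) ξ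
      = Z * x ^ 2 / Real.sqrt (σ ^ 2 + Z * x) * xiSc Z σ x ξ * (2 - xiSc Z σ x ξ)) ∧
    ((deriv (fun t => symb Z σ x t) ξ * x * deriv (fun s => xiSc Z σ s ξ) x
        - x * deriv (fun s => symb Z σ s ξ) x * deriv (fun t => xiSc Z σ x t) ξ = 0)
      ↔ xiSc Z σ x ξ = 0 ∨ xiSc Z σ x ξ = 2) ∧
    (0 < deriv (fun t => symb Z σ x t) ξ * x ↔ 1 < xiSc Z σ x ξ) ∧
    (deriv (fun t => symb Z σ x t) ξ * x < 0 ↔ xiSc Z σ x ξ < 1) :=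
  stmt13_general Z σ hZ x hx ξ
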